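/- The optimization problem of maximizing Σₙ τₙ Rₙ(τ_{n−1}, ζₙ, τₙ) subject to affine constraints τₙ ≥ 0, ζₙ ≥ Dₙ/V_max, and Σ τₙ + Σ ζₙ ≤ T has a concave objective over the feasible convex set; hence the set of optimal solutions is convex. -/
import Mathlib


open Finset

/-- Key inequality: joint concavity of the perspective-type function
`(x, y) ↦ x * log (1 + y / x)` on the region `x > 0`, `y ≥ 0`. -/
lemma stm_key (x1 x2 y1 y2 t s : ℝ) (hx1 : 0 < x1) (hx2 : 0 < x2)
    (hy1 : 0 ≤ y1) (hy2 : 0 ≤ y2) (ht : 0 ≤ t) (hs : 0 ≤ s) (hts : t + s = 1) :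
    t * (x1 * Real.log (1 + y1 / x1)) + s * (x2 * Real.log (1 + y2 / x2)) ≤
      (t * x1 + s * x2) * Real.log (1 + (t * y1 + s * y2) / (t * x1 + s * x2)) := by
  have hmin : 0 < min x1 x2 := lt_min hx1 hx2
  have hX : 0 < t * x1 + s * x2 := by
    have h1 := mul_le_mul_of_nonneg_left (min_le_left x1 x2) ht
    have h2 := mul_le_mul_of_nonneg_left (min_le_right x1 x2) hs
    nlinarith
  have hz1 : (0:ℝ) < 1 + y1 / x1 := by positivity
  have hz2 : (0:ℝ) < 1 + y2 / x2 := by positivity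
  have hw1 : 0 ≤ t * x1 / (t * x1 + s * x2) := by positivity
  have hw2 : 0 ≤ s * x2 / (t * x1 + s * x2) := by positivity
  have hwsum : t * x1 / (t * x1 + s * x2) + s * x2 / (t * x1 + s * x2) = 1 := by
    field_simp
  have hlog := strictConcaveOn_log_Ioi.concaveOn.2 (Set.mem_Ioi.2 hz1)
    (Set.mem_Ioi.2 hz2) hw1 hw2 hwsum
  simp only [smul_eq_mul] at hlog
  have hcombo : t * x1 / (t * x1 + s * x2) * (1 + y1 / x1) +
      s * x2 / (t * x1 + s * x2) * (1 + y2 / x2) =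
      1 + (t * y1 + s * y2) / (t * x1 + s * x2) := by
    field_simp
    ring
  rw [hcombo] at hlog
  have hmul := mul_le_mul_of_nonneg_left hlog hX.le
  calc t * (x1 * Real.log (1 + y1 / x1)) + s * (x2 * Real.log (1 + y2 / x2))
      = (t * x1 + s * x2) * (t * x1 / (t * x1 + s * x2) * Real.log (1 + y1 / x1) +
          s * x2 / (t * x1 + s * x2) * Real.log (1 + y2 / x2)) := by
        field_simp
    _ ≤ (t * x1 + s * x2) *
          Real.log (1 + (t * y1 + s * y2) / (t * x1 + s * x2)) := hmul

/-- The set of maximizers of a concave function over its domain is convex. -/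
lemma stm_argmax_convex {E : Type*} [AddCommGroup E] [Module ℝ E]
    {S : Set E} {F : E → ℝ} (hF : ConcaveOn ℝ S F) :
    Convex ℝ {p ∈ S | ∀ q ∈ S, F q ≤ F p} := by
  intro p hp q hq t s ht hs hts
  refine ⟨hF.1 hp.1 hq.1 ht hs hts, fun r hr => ?_⟩
  have h2 := hF.2 hp.1 hq.1 ht hs hts
  have hpq := hp.2 q hq.1
  have hqp := hq.2 p hp.1
  have hrp := hp.2 r hr
  simp only [smul_eq_mul] at h2
  have key : t * F p + s * F q = F p := by
    have hEq : F q = F p := le_antisymm hpq hqp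
    rw [hEq, ← add_mul, hts, one_mul]
  linarith

/-- The STM objective is concave over the convex feasible set, hence the set of
optimal solutions is convex. -/
theorem stm_concave_and_optima_convex (N : ℕ) (hN : 0 < N)
    (γ a b D : Fin N → ℝ) (Vmax T : ℝ)
    (hγ : ∀ n, 0 < γ n) (ha : ∀ n, 0 < a n) (hb : ∀ n, 0 < b n) (hD : ∀ n, 0 < D n)
    (hV : 0 < Vmax) (hT : 0 < T)
    (F : (Fin (N + 1) → ℝ) × (Fin N → ℝ) → ℝ)
    (hF : F = fun p => ∑ n : Fin N,
      (p.1 n.succ / 2) *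
        Real.log (1 + γ n * (a n * p.1 n.castSucc + b n * p.2 n) / p.1 n.succ))
    (S : Set ((Fin (N + 1) → ℝ) × (Fin N → ℝ)))
    (hS : S = {p | (∀ n, 0 < p.1 n) ∧ (∀ n, D n / Vmax ≤ p.2 n) ∧
      ∑ n, p.1 n + ∑ n, p.2 n ≤ T}) :
    ConcaveOn ℝ S F ∧ Convex ℝ S ∧
      Convex ℝ {p ∈ S | ∀ q ∈ S, F q ≤ F p} := by
  subst hF hS
  -- positivity of ζ coordinates on S
  have hζpos : ∀ n, 0 < D n / Vmax := fun n => div_pos (hD n) hV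
  -- convexity of S
  have hSconv : Convex ℝ {p : (Fin (N + 1) → ℝ) × (Fin N → ℝ) |
      (∀ n, 0 < p.1 n) ∧ (∀ n, D n / Vmax ≤ p.2 n) ∧
      ∑ n, p.1 n + ∑ n, p.2 n ≤ T} := by
    intro p hp q hq t s ht hs hts
    obtain ⟨hp1, hp2, hp3⟩ := hp
    obtain ⟨hq1, hq2, hq3⟩ := hq
    refine ⟨fun n => ?_, fun n => ?_, ?_⟩
    · show 0 < t * p.1 n + s * q.1 n
      have hmin : 0 < min (p.1 n) (q.1 n) := lt_min (hp1 n) (hq1 n)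
      have h1 := mul_le_mul_of_nonneg_left (min_le_left (p.1 n) (q.1 n)) ht
      have h2 := mul_le_mul_of_nonneg_left (min_le_right (p.1 n) (q.1 n)) hs
      nlinarith
    · show D n / Vmax ≤ t * p.2 n + s * q.2 n
      have h1 := mul_le_mul_of_nonneg_left (hp2 n) ht
      have h2 := mul_le_mul_of_nonneg_left (hq2 n) hs
      have h3 : t * (D n / Vmax) + s * (D n / Vmax) = D n / Vmax := by
        rw [← add_mul, hts, one_mul]
      linarith
    · show ∑ n, (t * p.1 n + s * q.1 n) + ∑ n, (t * p.2 n + s * q.2 n) ≤ T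
      rw [Finset.sum_add_distrib, Finset.sum_add_distrib, ← Finset.mul_sum,
        ← Finset.mul_sum, ← Finset.mul_sum, ← Finset.mul_sum]
      nlinarith
  -- concavity of F
  have hFconc : ConcaveOn ℝ {p : (Fin (N + 1) → ℝ) × (Fin N → ℝ) |
      (∀ n, 0 < p.1 n) ∧ (∀ n, D n / Vmax ≤ p.2 n) ∧
      ∑ n, p.1 n + ∑ n, p.2 n ≤ T}
      (fun p => ∑ n : Fin N, (p.1 n.succ / 2) *
        Real.log (1 + γ n * (a n * p.1 n.castSucc + b n * p.2 n) / p.1 n.succ)) := by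
    refine ⟨hSconv, fun p hp q hq t s ht hs hts => ?_⟩
    obtain ⟨hp1, hp2, _⟩ := hp
    obtain ⟨hq1, hq2, _⟩ := hq
    simp only [smul_eq_mul, Finset.mul_sum, ← Finset.sum_add_distrib]
    apply Finset.sum_le_sum
    intro n _
    have hyp : 0 ≤ γ n * (a n * p.1 n.castSucc + b n * p.2 n) := by
      have h1 := mul_pos (ha n) (hp1 n.castSucc)
      have h2 := mul_nonneg (hb n).le (le_trans (hζpos n).le (hp2 n))
      exact mul_nonneg (hγ n).le (by linarith)
    have hyq : 0 ≤ γ n * (a n * q.1 n.castSucc + b n * q.2 n) := by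
      have h1 := mul_pos (ha n) (hq1 n.castSucc)
      have h2 := mul_nonneg (hb n).le (le_trans (hζpos n).le (hq2 n))
      exact mul_nonneg (hγ n).le (by linarith)
    have key := stm_key (p.1 n.succ) (q.1 n.succ)
      (γ n * (a n * p.1 n.castSucc + b n * p.2 n))
      (γ n * (a n * q.1 n.castSucc + b n * q.2 n)) t s
      (hp1 n.succ) (hq1 n.succ) hyp hyq ht hs hts
    have hx : (t • p + s • q).1 n.succ = t * p.1 n.succ + s * q.1 n.succ := rfl
    have hxc : (t • p + s • q).1 n.castSucc = t * p.1 n.castSucc + s * q.1 n.castSucc := rfl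
    have hz : (t • p + s • q).2 n = t * p.2 n + s * q.2 n := rfl
    rw [hx, hxc, hz]
    have hy : γ n * (a n * (t * p.1 n.castSucc + s * q.1 n.castSucc) +
        b n * (t * p.2 n + s * q.2 n)) =
        t * (γ n * (a n * p.1 n.castSucc + b n * p.2 n)) +
        s * (γ n * (a n * q.1 n.castSucc + b n * q.2 n)) := by ring
    rw [hy]
    linarith
  exact ⟨hFconc, hSconv, stm_argmax_convex hFconc⟩
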